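/- Let A be a (possibly noncommutative) ℚ(q)-algebra and let x, y ∈ A be nilpotent elements (so all exponential series are finite sums) satisfying xy = q^2 yx. Then exp_q(x+y) = exp_q(y) · exp_q(x). -/

import Mathlib

/-- `(n)_q = (q^(2n) - 1)/(q^2 - 1)`. -/
noncomputable def qNum {K : Type*} [Field K] (q : K) (n : ℕ) : K :=
  (q ^ (2 * n) - 1) / (q ^ 2 - 1)

/-- `(n)_q!`. -/
noncomputable def qFact {K : Type*} [Field K] (q : K) (n : ℕ) : K :=
  ∏ k ∈ Finset.Icc 1 n, qNum q k

/-- The truncated `q`-exponential `Σ_{n < N} x^n/(n)_q!`; for `x` nilpotent with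
`x^N = 0` this equals the full `q`-exponential series. -/
noncomputable def qExpTrunc {K : Type*} [Field K] {A : Type*} [Ring A] [Algebra K A]
    (q : K) (N : ℕ) (x : A) : A :=
  ∑ n ∈ Finset.range N, (qFact q n)⁻¹ • x ^ n

/-!
The `n`-th term `(x + y)^n/(n)_q!` of `exp_q(x + y)` is the `q`-binomial expansion
`Σ_{a + b = n} (y^a/(a)_q!) (x^b/(b)_q!)`, proved by induction on `n` from the additivity
`(a + b)_q = (a)_q + q^(2a) (b)_q`, the recursion `z · z^n/(n)_q! = (n+1)_q · z^(n+1)/(n+1)_q!`,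
and the commutation rule `x y^a = q^(2a) y^a x`. Summing over `n < 2N` gives the
Cauchy product of the two truncated exponentials, because every term with `a ≥ N` or `b ≥ N`
vanishes.
-/

open Finset

theorem sum_range_sum_antidiagonal_eq_sum_range_product {M : Type*} [AddCommMonoid M]
    (N : ℕ) (f : ℕ × ℕ → M)
    (hf : ∀ p : ℕ × ℕ, N ≤ p.1 ∨ N ≤ p.2 → f p = 0) :
    ∑ n ∈ range (2 * N), ∑ p ∈ antidiagonal n, f p =
      ∑ p ∈ range N ×ˢ range N, f p := by
  calc ∑ n ∈ range (2 * N), ∑ p ∈ antidiagonal n, f p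
      = ∑ n ∈ range (2 * N), ∑ p ∈ range N ×ˢ range N with p.1 + p.2 = n, f p := by
        refine sum_congr rfl fun n _ => (sum_subset ?_ ?_).symm
        · intro p hp
          simp only [mem_filter, HasAntidiagonal.mem_antidiagonal] at hp ⊢
          exact hp.2
        · intro p hp hpN
          simp only [mem_filter, mem_product, mem_range, HasAntidiagonal.mem_antidiagonal]
            at hp hpN
          exact hf p (by omega)
    _ = ∑ p ∈ range N ×ˢ range N, f p := by
        refine sum_fiberwise_of_maps_to (fun p hp => ?_) f
        simp only [mem_product, mem_range] at hp ⊢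
        omega

theorem mul_pow_of_mul_eq_smul {R A : Type*} [CommSemiring R] [Semiring A] [Algebra R A]
    {c : R} {x y : A} (h : x * y = c • (y * x)) (k : ℕ) :
    x * y ^ k = c ^ k • (y ^ k * x) := by
  induction k with
  | zero => simp
  | succ k ih =>
    rw [pow_succ, ← mul_assoc, ih, smul_mul_assoc, mul_assoc, h, mul_smul_comm, smul_smul,
      ← mul_assoc, ← pow_succ, pow_succ]

section QCalculus

variable {K : Type*} [Field K] {q : K}

theorem qNum_zero (q : K) : qNum q 0 = 0 := by simp [qNum]

theorem qNum_add (hq : q ^ 2 - 1 ≠ 0) (a b : ℕ) :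
    qNum q (a + b) = qNum q a + q ^ (2 * a) * qNum q b := by
  simp only [qNum]
  field_simp
  ring

theorem sq_sub_one_ne_zero_of_qNum_one_ne_zero (h : qNum q 1 ≠ 0) : q ^ 2 - 1 ≠ 0 := by
  contrapose! h
  simp [qNum, h]

theorem qFact_zero (q : K) : qFact q 0 = 1 := by simp [qFact]

theorem qFact_succ (q : K) (n : ℕ) : qFact q (n + 1) = qFact q n * qNum q (n + 1) :=
  prod_Icc_succ_top (Nat.le_add_left 1 n) _

variable {A : Type*} [Ring A] [Algebra K A]

noncomputable def qExpTerm (q : K) (n : ℕ) (z : A) : A :=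
  (qFact q n)⁻¹ • z ^ n

theorem qExpTrunc_eq_sum_qExpTerm (q : K) (N : ℕ) (z : A) :
    qExpTrunc q N z = ∑ n ∈ range N, qExpTerm q n z :=
  rfl

theorem qExpTerm_zero (q : K) (z : A) : qExpTerm q 0 z = 1 := by
  simp [qExpTerm, qFact_zero]

theorem qExpTerm_eq_zero_of_pow_eq_zero {z : A} {N n : ℕ} (hz : z ^ N = 0) (hn : N ≤ n) :
    qExpTerm q n z = 0 := by
  rw [qExpTerm, pow_eq_zero_of_le hn hz, smul_zero]

theorem mul_qExpTerm {n : ℕ} (hn : qNum q (n + 1) ≠ 0) (z : A) :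
    z * qExpTerm q n z = qNum q (n + 1) • qExpTerm q (n + 1) z := by
  rw [qExpTerm, qExpTerm, qFact_succ, smul_smul, mul_inv, mul_left_comm,
    mul_inv_cancel₀ hn, mul_one, mul_smul_comm, pow_succ']

theorem mul_qExpTerm_of_mul_eq_smul {x y : A} (h : x * y = q ^ 2 • (y * x)) (n : ℕ) :
    x * qExpTerm q n y = q ^ (2 * n) • (qExpTerm q n y * x) := by
  rw [qExpTerm, mul_smul_comm, mul_pow_of_mul_eq_smul h, smul_comm, smul_mul_assoc, pow_mul]

theorem add_mul_sum_antidiagonal_qExpTerm (hgen : ∀ n : ℕ, 1 ≤ n → qNum q n ≠ 0) {x y : A}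
    (h : x * y = q ^ 2 • (y * x)) (n : ℕ) :
    (x + y) * ∑ p ∈ antidiagonal n, qExpTerm q p.1 y * qExpTerm q p.2 x =
      qNum q (n + 1) • ∑ p ∈ antidiagonal (n + 1), qExpTerm q p.1 y * qExpTerm q p.2 x := by
  have hq : q ^ 2 - 1 ≠ 0 := sq_sub_one_ne_zero_of_qNum_one_ne_zero (hgen 1 le_rfl)
  have hsucc (k : ℕ) : qNum q (k + 1) ≠ 0 := hgen (k + 1) k.succ_pos
  calc (x + y) * ∑ p ∈ antidiagonal n, qExpTerm q p.1 y * qExpTerm q p.2 x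
      = ∑ p ∈ antidiagonal n,
          (x * qExpTerm q p.1 y * qExpTerm q p.2 x + y * qExpTerm q p.1 y * qExpTerm q p.2 x) := by
        rw [mul_sum]
        simp only [add_mul, mul_assoc]
    _ = ∑ p ∈ antidiagonal n,
          ((q ^ (2 * p.1) * qNum q (p.2 + 1)) • (qExpTerm q p.1 y * qExpTerm q (p.2 + 1) x)
            + qNum q (p.1 + 1) • (qExpTerm q (p.1 + 1) y * qExpTerm q p.2 x)) := by
        refine sum_congr rfl fun p _ => ?_
        rw [mul_qExpTerm_of_mul_eq_smul h, mul_qExpTerm (hsucc _), smul_mul_assoc, mul_assoc,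
          mul_qExpTerm (hsucc _), mul_smul_comm, smul_smul, smul_mul_assoc]
    _ = ∑ p ∈ antidiagonal (n + 1),
          (q ^ (2 * p.1) * qNum q p.2) • (qExpTerm q p.1 y * qExpTerm q p.2 x)
        + ∑ p ∈ antidiagonal (n + 1), qNum q p.1 • (qExpTerm q p.1 y * qExpTerm q p.2 x) := by
        rw [Nat.sum_antidiagonal_succ', Nat.sum_antidiagonal_succ, sum_add_distrib]
        simp only [qNum_zero, mul_zero, zero_smul, zero_add]
    _ = qNum q (n + 1) • ∑ p ∈ antidiagonal (n + 1), qExpTerm q p.1 y * qExpTerm q p.2 x := by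
        rw [smul_sum, ← sum_add_distrib]
        refine sum_congr rfl fun p hp => ?_
        rw [← HasAntidiagonal.mem_antidiagonal.mp hp, qNum_add hq, ← add_smul, add_comm]

theorem qExpTerm_add (hgen : ∀ n : ℕ, 1 ≤ n → qNum q n ≠ 0) {x y : A}
    (h : x * y = q ^ 2 • (y * x)) (n : ℕ) :
    qExpTerm q n (x + y) = ∑ p ∈ antidiagonal n, qExpTerm q p.1 y * qExpTerm q p.2 x := by
  induction n with
  | zero => simp [qExpTerm_zero]
  | succ n ih =>
    have hn : qNum q (n + 1) ≠ 0 := hgen (n + 1) n.succ_pos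
    refine smul_right_injective A hn ?_
    dsimp only
    rw [← mul_qExpTerm hn, ih, add_mul_sum_antidiagonal_qExpTerm hgen h]

end QCalculus

theorem qexp_add_general {K : Type*} [Field K] {A : Type*} [Ring A] [Algebra K A]
    (q : K) (hgen : ∀ n : ℕ, 1 ≤ n → qNum q n ≠ 0)
    (x y : A) (N : ℕ) (hx : x ^ N = 0) (hy : y ^ N = 0)
    (hcomm : x * y = q ^ 2 • (y * x)) :
    qExpTrunc q (2 * N) (x + y) = qExpTrunc q N y * qExpTrunc q N x := by
  have hvanish (p : ℕ × ℕ) (hp : N ≤ p.1 ∨ N ≤ p.2) :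
      qExpTerm q p.1 y * qExpTerm q p.2 x = 0 := by
    rcases hp with hp | hp
    · rw [qExpTerm_eq_zero_of_pow_eq_zero hy hp, zero_mul]
    · rw [qExpTerm_eq_zero_of_pow_eq_zero hx hp, mul_zero]
  simp only [qExpTrunc_eq_sum_qExpTerm, qExpTerm_add hgen hcomm, sum_mul_sum]
  rw [← sum_product' (f := fun a b => qExpTerm q a y * qExpTerm q b x)]
  exact sum_range_sum_antidiagonal_eq_sum_range_product N _ hvanish

/-- if `x, y` are nilpotent (say `x^N = y^N = 0`) and `x*y = q^2 • (y*x)`,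
then `exp_q(x + y) = exp_q(y) * exp_q(x)` (all exponentials being finite sums; since
`(x+y)^{2N} = 0`, truncating at `2N` resp. `N` captures the full series). -/
theorem qexp_add {K : Type*} [Field K] {A : Type*} [Ring A] [Algebra K A]
    (q : K) (hq : q ≠ 0) (hgen : ∀ n : ℕ, 1 ≤ n → qNum q n ≠ 0)
    (x y : A) (N : ℕ) (hx : x ^ N = 0) (hy : y ^ N = 0)
    (hcomm : x * y = q ^ 2 • (y * x)) :
    qExpTrunc q (2 * N) (x + y) = qExpTrunc q N y * qExpTrunc q N x :=
  qexp_add_general q hgen x y N hx hy hcomm
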